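/- Let 0 < p < 1, q = 1 − p, and f(t) = q e^{−itp} + p e^{itq} (the characteristic function of the centered Bernoulli variable X − p). Then for all real t, |f(t)| ≤ exp(−2pq sin²(t/2)). -/

import Mathlib

/-!
Factoring out the unimodular `e^{-itp}` gives `|f(t)| = |q + p e^{it}|`, and
`|q + p e^{it}|² = p² + q² + 2pq cos t = 1 - 4pq sin²(t/2) ≤ exp(-4pq sin²(t/2))` by `1 + x ≤ eˣ`.
-/

open Complex

theorem norm_add_mul_exp_mul_I_sq (a b t : ℝ) :
    ‖(a : ℂ) + b * exp (t * I)‖ ^ 2 = a ^ 2 + b ^ 2 + 2 * a * b * Real.cos t := by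
  rw [Complex.sq_norm, normSq_apply, exp_mul_I, ← ofReal_cos, ← ofReal_sin]
  simp only [add_re, add_im, mul_re, mul_im, ofReal_re, ofReal_im, I_re, I_im]
  linear_combination b ^ 2 * Real.sin_sq_add_cos_sq t

theorem norm_one_sub_add_mul_exp_mul_I_sq (p t : ℝ) :
    ‖(1 - p : ℂ) + p * exp (t * I)‖ ^ 2 = 1 - 4 * p * (1 - p) * Real.sin (t / 2) ^ 2 := by
  have h := norm_add_mul_exp_mul_I_sq (1 - p) p t
  push_cast at h
  rw [h, Real.sin_sq_eq_half_sub, show 2 * (t / 2) = t by ring]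
  ring

theorem one_sub_mul_exp_add_mul_exp_eq (p t : ℝ) :
    (1 - p : ℂ) * exp (-I * t * p) + p * exp (I * t * (1 - p)) =
      exp (↑(-(t * p)) * I) * ((1 - p : ℂ) + p * exp (t * I)) := by
  rw [show I * t * (1 - p) = -I * t * p + t * I by ring, exp_add,
    show -I * t * p = ↑(-(t * p)) * I by push_cast; ring]
  ring

theorem le_exp_of_sq_le_one_add {x y : ℝ} (hx : 0 ≤ x) (h : x ^ 2 ≤ 1 + 2 * y) :
    x ≤ Real.exp y := by
  have hsq : x ^ 2 ≤ Real.exp y ^ 2 := by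
    rw [← Real.exp_nat_mul]
    push_cast
    linarith [Real.add_one_le_exp (2 * y)]
  exact (pow_le_pow_iff_left₀ hx (Real.exp_pos y).le two_ne_zero).1 hsq

theorem bernoulli_charfun_bound (p : ℝ)
    (f : ℝ → ℂ)
    (hf : ∀ t : ℝ, f t =
      (1 - p : ℂ) * Complex.exp (-Complex.I * t * p) +
        (p : ℂ) * Complex.exp (Complex.I * t * (1 - p)))
    (t : ℝ) :
    ‖f t‖ ≤ Real.exp (-2 * p * (1 - p) * Real.sin (t / 2) ^ 2) := by
  rw [hf, one_sub_mul_exp_add_mul_exp_eq, norm_mul, norm_exp_ofReal_mul_I, one_mul]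
  refine le_exp_of_sq_le_one_add (norm_nonneg _) ?_
  rw [norm_one_sub_add_mul_exp_mul_I_sq]
  linarith
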